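/- Let a, c, a', c' ∈ ℝ² with (a,c) ≠ (a',c') and dist(a,c) = dist(a',c') = δ ≠ 0. Then there exist curves C₁, C₂ ⊂ ℝ², which are either two concentric circles or two parallel lines, such that a, a' ∈ C₁, c, c' ∈ C₂, and S_{ac} ∩ S_{a'c'} ⊆ {(b,d) ∈ ℝ²×ℝ² : b ∈ C₁, d ∈ C₂, dist(b,d) = δ}. -/

import Mathlib

/-!
If `B(a, b) = B(c, d) = L`, the reflection in `L` maps `a ↦ b` and `c ↦ d`. So a point `(b, d)` of
`S_{ac} ∩ S_{a'c'}` gives line reflections `σ, σ'` with `σ a = σ' a' = b` and `σ c = σ' c' = d`; in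
particular `dist b d = dist a c`. The direct isometry `σ' ∘ σ` maps `a ↦ a'` and `c ↦ c'`, so it
does not depend on `(b, d)`. If it is a rotation about `o`, then `σ` fixes `o` (it conjugates
`σ' ∘ σ` to its inverse), so `b` and `d` lie on the circles about `o` through `a` and `c`. If it is
a translation by `τ`, the mirror of `σ` is perpendicular to `τ`, so `b - a` and `d - c` are parallel
to `τ`. The computations are done in `ℂ`, where a line reflection is `z ↦ u * conj z + w`.
-/

noncomputable section

abbrev Plane := EuclideanSpace ℝ (Fin 2)

def bisector (a b : Plane) : Set Plane := {x | dist x a = dist x b}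

def bisectorSurface (a c : Plane) : Set (Plane × Plane) :=
  {bd | bd.1 ≠ a ∧ bd.2 ≠ c ∧ bisector a bd.1 = bisector c bd.2}

open ComplexConjugate Complex

namespace Complex

theorem dist_eq_dist_iff_re_conj_mul (x a b : ℂ) :
    dist x a = dist x b ↔ (conj (b - a) * x).re = (normSq b - normSq a) / 2 := by
  rw [← sq_eq_sq₀ dist_nonneg dist_nonneg, dist_eq, dist_eq, ← normSq_eq_norm_sq,
    ← normSq_eq_norm_sq]
  simp only [normSq_apply, mul_re, conj_re, conj_im, sub_re, sub_im]
  constructor <;> intro h <;> linarith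

theorem exists_real_mul_of_re_mul_eq_iff {p q : ℂ} {s t : ℝ} (hp : p ≠ 0)
    (h : ∀ x, (p * x).re = s ↔ (q * x).re = t) : ∃ r : ℝ, q = r * p ∧ t = r * s := by
  have hq₀ : (q * (s / p)).re = t := (h _).1 (by field_simp; simp)
  have hq₁ : (q * (s / p + I / p)).re = t := (h _).1 (by field_simp; simp)
  have him : (q / p).im = 0 := by
    have : (q * (s / p + I / p)).re = (q * (s / p)).re - (q / p).im := by
      rw [mul_add, add_re, show q * (I / p) = I * (q / p) by ring, I_mul_re]; ring
    linarith
  have hr : q / p = ((q / p).re : ℂ) := ext (by simp) (by simp [him])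
  refine ⟨(q / p).re, by rw [← hr, div_mul_cancel₀ q hp], ?_⟩
  rw [← hq₀, show q * (s / p) = q / p * s by ring, re_mul_ofReal]

theorem im_conj_mul_eq_zero_of_mul_conj_eq_neg {u y z : ℂ} (hu : u ≠ 0)
    (hy : u * conj y = -y) (hz : u * conj z = -z) : (conj y * z).im = 0 := by
  rw [← conj_eq_iff_im, map_mul, conj_conj]
  apply mul_left_cancel₀ hu
  linear_combination y * hz - z * hy

theorem inner_I_mul_eq_inner_I_mul_iff (τ x y : ℂ) :
    inner ℝ (I * τ) x = inner ℝ (I * τ) y ↔ (conj τ * (x - y)).im = 0 := by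
  rw [← sub_eq_zero, ← inner_sub_right, Complex.inner]
  simp only [map_mul, conj_I, mul_re, mul_im, neg_re, neg_im, I_re, I_im, conj_re, conj_im]
  constructor <;> intro h <;> linarith

theorem im_conj_mul_self (z : ℂ) : (conj z * z).im = 0 := by
  rw [conj_mul']; norm_cast

end Complex

def IsConcentricCirclesOrParallelLines {V : Type*} [NormedAddCommGroup V] [InnerProductSpace ℝ V]
    (C₁ C₂ : Set V) : Prop :=
  (∃ o r₁ r₂, 0 < r₁ ∧ 0 < r₂ ∧ C₁ = Metric.sphere o r₁ ∧ C₂ = Metric.sphere o r₂) ∨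
    ∃ (v : V) (t₁ t₂ : ℝ), v ≠ 0 ∧
      C₁ = {x | (inner ℝ v x : ℝ) = t₁} ∧ C₂ = {x | (inner ℝ v x : ℝ) = t₂}

theorem IsConcentricCirclesOrParallelLines.preimage {V W : Type*} [NormedAddCommGroup V]
    [InnerProductSpace ℝ V] [NormedAddCommGroup W] [InnerProductSpace ℝ W] {C₁ C₂ : Set V}
    (h : IsConcentricCirclesOrParallelLines C₁ C₂) (e : W ≃ₗᵢ[ℝ] V) :
    IsConcentricCirclesOrParallelLines (e ⁻¹' C₁) (e ⁻¹' C₂) := by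
  rcases h with ⟨o, r₁, r₂, hr₁, hr₂, rfl, rfl⟩ | ⟨v, t₁, t₂, hv, rfl, rfl⟩
  · exact Or.inl ⟨e.symm o, r₁, r₂, hr₁, hr₂, e.toIsometryEquiv.preimage_sphere o r₁,
      e.toIsometryEquiv.preimage_sphere o r₂⟩
  · refine Or.inr ⟨e.symm v, t₁, t₂, by simpa using hv, ?_, ?_⟩ <;>
      ext x <;> simp [e.symm.inner_map_eq_flip]

@[ext]
structure LineReflection where
  u : ℂ
  w : ℂ
  norm_u : ‖u‖ = 1
  mul_conj_w : u * conj w = -w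

namespace LineReflection

@[coe]
def toFun (σ : LineReflection) (z : ℂ) : ℂ := σ.u * conj z + σ.w

instance : CoeFun LineReflection (fun _ ↦ ℂ → ℂ) := ⟨toFun⟩

variable (σ σ' : LineReflection)

theorem apply_def (z : ℂ) : σ z = σ.u * conj z + σ.w := rfl

theorem u_ne_zero : σ.u ≠ 0 := norm_ne_zero_iff.1 (by simp [σ.norm_u])

theorem mul_conj_u : σ.u * conj σ.u = 1 := by
  rw [mul_conj', σ.norm_u]; norm_num

theorem apply_sub_apply (x y : ℂ) : σ x - σ y = σ.u * conj (x - y) := by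
  simp only [apply_def, map_sub]; ring

theorem dist_apply (x y : ℂ) : dist (σ x) (σ y) = dist x y := by
  rw [dist_eq, dist_eq, apply_sub_apply, norm_mul, norm_conj, σ.norm_u, one_mul]

@[simp]
theorem apply_apply (z : ℂ) : σ (σ z) = z := by
  simp only [apply_def, map_add, map_mul, conj_conj]
  linear_combination z * σ.mul_conj_u + σ.mul_conj_w

theorem comp_apply_sub (x y : ℂ) :
    σ' (σ x) - σ' (σ y) = σ'.u * conj σ.u * (x - y) := by
  rw [apply_sub_apply, apply_sub_apply, map_mul, conj_conj]; ring

/-- The reflection in the line `{x | (p * x).re = s}`. -/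
def ofLine (p : ℂ) (hp : p ≠ 0) (s : ℝ) : LineReflection where
  u := -conj p / p
  w := 2 * s / p
  norm_u := by rw [norm_div, norm_neg, norm_conj, div_self (norm_ne_zero_iff.2 hp)]
  mul_conj_w := by
    have : conj p ≠ 0 := by simpa using hp
    simp only [map_div₀, map_mul, conj_ofReal, map_ofNat]
    field_simp

theorem ofLine_eq_ofLine {p q : ℂ} (hp : p ≠ 0) (hq : q ≠ 0) {s t r : ℝ} (hqp : q = r * p)
    (hts : t = r * s) : ofLine q hq t = ofLine p hp s := by
  subst hqp hts
  have hr : (r : ℂ) ≠ 0 := left_ne_zero_of_mul hq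
  ext <;> simp only [ofLine, map_mul, conj_ofReal] <;> push_cast <;> field_simp

theorem ofLine_bisector_apply {a b : ℂ} (h : b ≠ a) :
    ofLine (conj (b - a)) ((map_ne_zero _).2 (sub_ne_zero.2 h)) ((normSq b - normSq a) / 2) a =
      b := by
  have : conj (b - a) ≠ 0 := (map_ne_zero _).2 (sub_ne_zero.2 h)
  simp only [apply_def, ofLine, conj_conj]
  field_simp
  push_cast
  simp only [normSq_eq_conj_mul_self, map_sub]
  ring

theorem exists_of_forall_dist_iff {a b c d : ℂ} (hab : b ≠ a) (hcd : d ≠ c)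
    (h : ∀ x, dist x a = dist x b ↔ dist x c = dist x d) :
    ∃ σ : LineReflection, σ a = b ∧ σ c = d := by
  have hp : conj (b - a) ≠ 0 := (map_ne_zero _).2 (sub_ne_zero.2 hab)
  have hq : conj (d - c) ≠ 0 := (map_ne_zero _).2 (sub_ne_zero.2 hcd)
  have h' : ∀ x, (conj (b - a) * x).re = (normSq b - normSq a) / 2 ↔
      (conj (d - c) * x).re = (normSq d - normSq c) / 2 := fun x ↦ by
    rw [← dist_eq_dist_iff_re_conj_mul, ← dist_eq_dist_iff_re_conj_mul]; exact h x
  obtain ⟨r, hqp, hts⟩ := exists_real_mul_of_re_mul_eq_iff hp h'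
  refine ⟨ofLine _ hp _, ofLine_bisector_apply hab, ?_⟩
  rw [← ofLine_eq_ofLine hp hq hqp hts, ofLine_bisector_apply hcd]

variable {σ σ'}

theorem comp_apply_eq {a c a' c' : ℂ} (hac : a ≠ c) (ha : σ a = σ' a') (hc : σ c = σ' c')
    (z : ℂ) : σ' (σ z) = a' + (a' - c') / (a - c) * (z - a) := by
  have hρ : σ'.u * conj σ.u = (a' - c') / (a - c) := by
    rw [eq_div_iff (sub_ne_zero.2 hac), ← comp_apply_sub, ha, hc, apply_apply, apply_apply]
  rw [← hρ, ← comp_apply_sub, ha, apply_apply]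
  ring

theorem apply_eq_self_of_comp_sub {ρ o : ℂ} (hρ : ρ ≠ 1)
    (hf : ∀ z, σ' (σ z) - o = ρ * (z - o)) : σ o = o := by
  have ho : σ' (σ o) = o := by simpa [sub_eq_zero] using hf o
  -- `σ o` is another fixed point of `σ' ∘ σ`
  have hfix : σ' (σ (σ o)) = σ o := by
    rw [apply_apply]
    calc σ' o = σ' (σ' (σ o)) := by rw [ho]
      _ = σ o := apply_apply _ _
  have h := hf (σ o)
  rw [hfix] at h
  have : (1 - ρ) * (σ o - o) = 0 := by linear_combination h
  exact sub_eq_zero.1 ((mul_eq_zero.1 this).resolve_left (sub_ne_zero.2 (Ne.symm hρ)))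

theorem im_conj_mul_apply_sub_eq_zero_of_comp {τ : ℂ} (hf : ∀ z, σ' (σ z) = z + τ) (x : ℂ) :
    (conj τ * (σ x - x)).im = 0 := by
  have hσ' : ∀ y, σ' y = σ y + τ := fun y ↦ by simpa using hf (σ y)
  have hτ : σ.u * conj τ = -τ := by
    have h := hσ' (σ' 0)
    rw [apply_apply] at h
    calc σ.u * conj τ = σ (σ' 0) - σ (σ 0) := by rw [apply_sub_apply, hσ' 0, add_sub_cancel_left]
      _ = -τ := by rw [apply_apply]; linear_combination -h
  refine im_conj_mul_eq_zero_of_mul_conj_eq_neg σ.u_ne_zero hτ ?_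
  rw [← apply_sub_apply, apply_apply]
  ring

-- Through `exists_of_mem_bisectorSurface`, the pairs `(σ a, σ c)` below are the points of
-- `S_{ac} ∩ S_{a'c'}`.
def IsCurvePairFor (a c a' c' : ℂ) (C₁ C₂ : Set ℂ) : Prop :=
  IsConcentricCirclesOrParallelLines C₁ C₂ ∧ a ∈ C₁ ∧ a' ∈ C₁ ∧ c ∈ C₂ ∧ c' ∈ C₂ ∧
    ∀ σ σ' : LineReflection, σ a = σ' a' → σ c = σ' c' → σ a ≠ a → σ c ≠ c →
      σ a ∈ C₁ ∧ σ c ∈ C₂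

theorem exists_isCurvePairFor_of_parallel {a c a' c' τ : ℂ} (hτ : τ ≠ 0)
    (ha : (conj τ * (a' - a)).im = 0) (hc : (conj τ * (c' - c)).im = 0)
    (h : ∀ σ σ' : LineReflection, σ a = σ' a' → σ c = σ' c' → σ a ≠ a → σ c ≠ c →
      (conj τ * (σ a - a)).im = 0 ∧ (conj τ * (σ c - c)).im = 0) :
    ∃ C₁ C₂, IsCurvePairFor a c a' c' C₁ C₂ := by
  simp only [← inner_I_mul_eq_inner_I_mul_iff] at ha hc h
  exact ⟨_, _, Or.inr ⟨_, _, _, mul_ne_zero I_ne_zero hτ, rfl, rfl⟩, rfl, ha, rfl, hc, h⟩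

theorem exists_isCurvePairFor_of_sub_eq_sub {a c a' c' : ℂ} (hne : (a, c) ≠ (a', c'))
    (hac : a ≠ c) (hac' : a' - c' = a - c) : ∃ C₁ C₂, IsCurvePairFor a c a' c' C₁ C₂ := by
  have hc' : c' - c = a' - a := by linear_combination -hac'
  have hτ : a' - a ≠ 0 := fun h ↦ hne <| by
    rw [sub_eq_zero.1 h, sub_eq_zero.1 (hc'.trans h)]
  refine exists_isCurvePairFor_of_parallel hτ (im_conj_mul_self _) (hc' ▸ im_conj_mul_self _)
    fun σ σ' ha hc _ _ ↦ ?_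
  have hf : ∀ z, σ' (σ z) = z + (a' - a) := fun z ↦ by
    rw [comp_apply_eq hac ha hc, (div_eq_one_iff_eq (sub_ne_zero.2 hac)).2 hac']; ring
  exact ⟨im_conj_mul_apply_sub_eq_zero_of_comp hf a, im_conj_mul_apply_sub_eq_zero_of_comp hf c⟩

theorem exists_isCurvePairFor_of_sub_ne_sub {a c a' c' : ℂ} (hne : (a, c) ≠ (a', c'))
    (hac : a ≠ c) (hdist : dist a' c' = dist a c) (hac' : a' - c' ≠ a - c) :
    ∃ C₁ C₂, IsCurvePairFor a c a' c' C₁ C₂ := by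
  set ρ := (a' - c') / (a - c)
  have hρ : ρ ≠ 1 := fun h ↦ hac' ((div_eq_one_iff_eq (sub_ne_zero.2 hac)).1 h)
  have hρn : ‖ρ‖ = 1 := by
    rw [norm_div, ← dist_eq, ← dist_eq, hdist, div_self (dist_ne_zero.2 hac)]
  -- the centre of the rotation `σ' ∘ σ`, which maps `a ↦ a'` and `c ↦ c'`
  set o := (a' - ρ * a) / (1 - ρ)
  have hrot : ∀ z, a' + ρ * (z - a) - o = ρ * (z - o) := fun z ↦ by
    have : 1 - ρ ≠ 0 := sub_ne_zero.2 (Ne.symm hρ)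
    simp only [o]; field_simp; ring
  have hσo : ∀ σ σ' : LineReflection, σ a = σ' a' → σ c = σ' c' → σ o = o := fun σ σ' ha hc ↦
    apply_eq_self_of_comp_sub hρ fun z ↦ by rw [comp_apply_eq hac ha hc]; exact hrot z
  have ha' : a' - o = ρ * (a - o) := by simpa using hrot a
  have hc' : c' - o = ρ * (c - o) := by
    rw [← hrot c]; simp only [ρ]; field_simp [sub_ne_zero.2 hac]; ring
  by_cases hdeg : o = a ∨ o = c
  · -- `σ` would fix `a` or `c`, so no pair `(σ a, σ c)` qualifies
    rcases hdeg with h | h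
    · have haa : a' = a := by simpa [h, sub_eq_zero] using ha'
      exact exists_isCurvePairFor_of_parallel (sub_ne_zero.2 fun hcc ↦ hne (by rw [haa, hcc]))
        (by simp [haa]) (im_conj_mul_self _)
        fun σ σ' ha hc hσa _ ↦ absurd (h ▸ hσo σ σ' ha hc) hσa
    · have hcc : c' = c := by simpa [h, sub_eq_zero] using hc'
      exact exists_isCurvePairFor_of_parallel (sub_ne_zero.2 fun haa ↦ hne (by rw [haa, hcc]))
        (im_conj_mul_self _) (by simp [hcc])
        fun σ σ' ha hc _ hσc ↦ absurd (h ▸ hσo σ σ' ha hc) hσc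
  obtain ⟨hoa, hoc⟩ := not_or.1 hdeg
  refine ⟨Metric.sphere o (dist a o), Metric.sphere o (dist c o),
    Or.inl ⟨o, _, _, dist_pos.2 (Ne.symm hoa), dist_pos.2 (Ne.symm hoc), rfl, rfl⟩,
    Metric.mem_sphere.2 rfl, ?_, Metric.mem_sphere.2 rfl, ?_, fun σ σ' ha hc _ _ ↦ ?_⟩
  · rw [Metric.mem_sphere, dist_eq, dist_eq, ha', norm_mul, hρn, one_mul]
  · rw [Metric.mem_sphere, dist_eq, dist_eq, hc', norm_mul, hρn, one_mul]
  · have hσ := hσo σ σ' ha hc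
    exact ⟨by rw [Metric.mem_sphere, ← σ.dist_apply a o, hσ],
      by rw [Metric.mem_sphere, ← σ.dist_apply c o, hσ]⟩

theorem exists_isCurvePairFor {a c a' c' : ℂ} (hne : (a, c) ≠ (a', c')) (hac : a ≠ c)
    (hdist : dist a' c' = dist a c) : ∃ C₁ C₂, IsCurvePairFor a c a' c' C₁ C₂ := by
  by_cases hac' : a' - c' = a - c
  · exact exists_isCurvePairFor_of_sub_eq_sub hne hac hac'
  · exact exists_isCurvePairFor_of_sub_ne_sub hne hac hdist hac'

end LineReflection

def Plane.toComplex : Plane ≃ₗᵢ[ℝ] ℂ := Complex.orthonormalBasisOneI.repr.symm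

theorem LineReflection.exists_of_mem_bisectorSurface {a c b d : Plane}
    (h : (b, d) ∈ bisectorSurface a c) :
    ∃ σ : LineReflection, σ a.toComplex = b.toComplex ∧ σ c.toComplex = d.toComplex := by
  obtain ⟨hba, hdc, hbis⟩ := h
  refine exists_of_forall_dist_iff (Plane.toComplex.injective.ne hba)
    (Plane.toComplex.injective.ne hdc) fun x ↦ ?_
  have hdist : ∀ p, dist x p.toComplex = dist (Plane.toComplex.symm x) p := fun p ↦ by
    rw [← Plane.toComplex.dist_map, LinearIsometryEquiv.apply_symm_apply]
  simp only [hdist]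
  exact Set.ext_iff.1 hbis _

/-- Intersection of two bisector surfaces: if `(a,c) ≠ (a',c')` and
`dist a c = dist a' c' = δ ≠ 0`, then there are two concentric circles or two parallel lines
`C₁, C₂` with `a, a' ∈ C₁`, `c, c' ∈ C₂`, and
`S_{ac} ∩ S_{a'c'} ⊆ {(b,d) : b ∈ C₁, d ∈ C₂, dist b d = δ}`. -/
theorem bisectorSurface_intersection (a c a' c' : Plane) (δ : ℝ)
    (hne : (a, c) ≠ (a', c')) (hδ : δ ≠ 0)
    (h1 : dist a c = δ) (h2 : dist a' c' = δ) :
    ∃ C₁ C₂ : Set Plane,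
      ((∃ o r₁ r₂, 0 < r₁ ∧ 0 < r₂ ∧ C₁ = Metric.sphere o r₁ ∧ C₂ = Metric.sphere o r₂) ∨
        (∃ (v : Plane) (t₁ t₂ : ℝ), v ≠ 0 ∧
          C₁ = {x | (inner ℝ v x : ℝ) = t₁} ∧ C₂ = {x | (inner ℝ v x : ℝ) = t₂})) ∧
      a ∈ C₁ ∧ a' ∈ C₁ ∧ c ∈ C₂ ∧ c' ∈ C₂ ∧
      bisectorSurface a c ∩ bisectorSurface a' c' ⊆
        {bd : Plane × Plane | bd.1 ∈ C₁ ∧ bd.2 ∈ C₂ ∧ dist bd.1 bd.2 = δ} := by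
  let e := Plane.toComplex
  have hac : e a ≠ e c := e.injective.ne (dist_ne_zero.1 (h1 ▸ hδ))
  obtain ⟨C₁, C₂, hC, ha, ha', hc, hc', hsub⟩ :=
    LineReflection.exists_isCurvePairFor (a' := e a') (c' := e c') (by simpa using hne) hac
      (by rw [e.dist_map, e.dist_map, h1, h2])
  refine ⟨e ⁻¹' C₁, e ⁻¹' C₂, hC.preimage e, ha, ha', hc, hc', ?_⟩
  rintro ⟨b, d⟩ ⟨hbd, hbd'⟩
  obtain ⟨σ, hσa, hσc⟩ := LineReflection.exists_of_mem_bisectorSurface hbd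
  obtain ⟨σ', hσa', hσc'⟩ := LineReflection.exists_of_mem_bisectorSurface hbd'
  have hmem := hsub σ σ' (hσa.trans hσa'.symm) (hσc.trans hσc'.symm)
    (hσa ▸ e.injective.ne hbd.1) (hσc ▸ e.injective.ne hbd.2.1)
  rw [hσa, hσc] at hmem
  refine ⟨hmem.1, hmem.2, ?_⟩
  rw [← h1, ← e.dist_map b, ← e.dist_map a, ← hσa, ← hσc, σ.dist_apply]
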